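/- arXiv:1204.2009 — 2 statements merged into one kernel-verified Lean document; each statement's English description precedes it below -/
import Mathlib

section
/- Let σ > 0 and define φ(ζ) = √(2/π) · ∫₀^{ζ/(2σ)} exp(-t²/2) dt. Let r₁, r₂, s₁, s₂ be positive reals with r₁·r₂ = s₁·s₂ and max{s₁, s₂} < max{r₁, r₂}. Then φ(r₁)·φ(r₂) < φ(s₁)·φ(s₂). -/
/-!
Write `N x = ∫₀ˣ e^{-t²/2} dt`, so that `φ ζ = √(2/π) · N (ζ / (2σ))`. The function
`u ↦ log N(eᵘ)` is strictly concave: its derivative is `x e^{-x²/2} / N x` at `x = eᵘ`,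
which is strictly decreasing in `x > 0` because `(1 - x²) N x < x e^{-x²/2}`. For a strictly
concave function, moving two points apart while keeping their sum fixed strictly decreases the
sum of the values; in logarithmic coordinates this is the inequality for `N`.
-/

noncomputable def phi (σ ζ : ℝ) : ℝ :=
  Real.sqrt (2/Real.pi) * ∫ t in (0:ℝ)..(ζ/(2*σ)), Real.exp (-t^2/2)

open Real Set

theorem StrictConcaveOn.add_lt_add_of_add_eq {s : Set ℝ} {f : ℝ → ℝ}
    (hf : StrictConcaveOn ℝ s f) {a b c d : ℝ} (ha : a ∈ s) (hb : b ∈ s)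
    (hsum : a + b = c + d) (hmax : max c d < max a b) : f a + f b < f c + f d := by
  wlog hba : b ≤ a generalizing a b
  · rw [add_comm (f a)]
    exact this hb ha (by linarith) (by rwa [max_comm b]) (by linarith)
  rw [max_eq_left hba, max_lt_iff] at hmax
  obtain ⟨hca, hda⟩ := hmax
  have hab : b < a := by linarith
  have hab' : a - b ≠ 0 := by linarith
  set θ := (c - b) / (a - b) with hθ
  have hθ0 : 0 < θ := div_pos (by linarith) (by linarith)
  have hθ1 : 0 < 1 - θ := by rw [hθ, sub_pos, div_lt_one (by linarith)]; linarith
  have hc : θ • a + (1 - θ) • b = c := by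
    simp only [smul_eq_mul, hθ]; field_simp; ring
  have hd : (1 - θ) • a + θ • b = d := by
    simp only [smul_eq_mul, hθ, show d = a + b - c by linarith]; field_simp; ring
  have h₁ := hf.2 ha hb hab.ne' hθ0 hθ1 (by ring)
  have h₂ := hf.2 ha hb hab.ne' hθ1 hθ0 (by ring)
  rw [hc] at h₁
  rw [hd] at h₂
  simp only [smul_eq_mul] at h₁ h₂
  linarith

noncomputable def normalIntegral (x : ℝ) : ℝ := ∫ t in (0:ℝ)..x, exp (-t^2/2)

theorem continuous_exp_neg_sq_div_two : Continuous fun t : ℝ => exp (-t^2/2) := by fun_prop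

theorem hasDerivAt_exp_neg_sq_div_two (x : ℝ) :
    HasDerivAt (fun t : ℝ => exp (-t^2/2)) (-x * exp (-x^2/2)) x :=
  ((hasDerivAt_pow 2 x).neg.div_const 2).exp.congr_deriv (by norm_num; ring)

theorem hasDerivAt_normalIntegral (x : ℝ) : HasDerivAt normalIntegral (exp (-x^2/2)) x :=
  intervalIntegral.integral_hasDerivAt_right
    (continuous_exp_neg_sq_div_two.intervalIntegrable 0 x)
    continuous_exp_neg_sq_div_two.aestronglyMeasurable.stronglyMeasurableAtFilter
    continuous_exp_neg_sq_div_two.continuousAt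

theorem continuous_normalIntegral : Continuous normalIntegral :=
  continuous_iff_continuousAt.2 fun x => (hasDerivAt_normalIntegral x).continuousAt

theorem normalIntegral_pos {x : ℝ} (hx : 0 < x) : 0 < normalIntegral x :=
  intervalIntegral.intervalIntegral_pos_of_pos
    (continuous_exp_neg_sq_div_two.intervalIntegrable 0 x) (fun _ => exp_pos _) hx

theorem one_sub_sq_mul_normalIntegral_lt {x : ℝ} (hx : 0 < x) :
    (1 - x^2) * normalIntegral x < x * exp (-x^2/2) := by
  set D : ℝ → ℝ := fun t => t * exp (-t^2/2) - (1 - t^2) * normalIntegral t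
  have hD : ∀ t, HasDerivAt D (2 * t * normalIntegral t) t := fun t =>
    (((hasDerivAt_id' t).mul (hasDerivAt_exp_neg_sq_div_two t)).sub
      (((hasDerivAt_const t 1).sub (hasDerivAt_pow 2 t)).mul
        (hasDerivAt_normalIntegral t))).congr_deriv (by norm_num; ring)
  have hmono : StrictMonoOn D (Ici 0) := by
    refine strictMonoOn_of_deriv_pos (convex_Ici 0)
      (continuous_iff_continuousAt.2 fun t => (hD t).continuousAt).continuousOn fun t ht => ?_
    rw [interior_Ici] at ht
    rw [(hD t).deriv]
    exact mul_pos (mul_pos two_pos ht) (normalIntegral_pos ht)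
  have hD0 : D 0 = 0 := by simp [D, normalIntegral]
  have := hmono (mem_Ici.2 le_rfl) hx.le hx
  simp only [hD0, D] at this
  linarith

theorem strictAntiOn_mul_exp_div_normalIntegral :
    StrictAntiOn (fun x => x * exp (-x^2/2) / normalIntegral x) (Ioi 0) := by
  have hN : ∀ x ∈ Ioi (0:ℝ), normalIntegral x ≠ 0 := fun x hx => (normalIntegral_pos hx).ne'
  refine strictAntiOn_of_deriv_neg (convex_Ioi 0)
    ((by fun_prop : Continuous fun x : ℝ => x * exp (-x^2/2)).continuousOn.div
      continuous_normalIntegral.continuousOn hN) fun x hx => ?_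
  rw [interior_Ioi] at hx
  have hderiv : HasDerivAt (fun x => x * exp (-x^2/2) / normalIntegral x)
      (exp (-x^2/2) * ((1 - x^2) * normalIntegral x - x * exp (-x^2/2)) / normalIntegral x ^ 2) x :=
    (((hasDerivAt_id' x).mul (hasDerivAt_exp_neg_sq_div_two x)).div
      (hasDerivAt_normalIntegral x) (hN x hx)).congr_deriv (by rw [Pi.mul_apply]; ring)
  rw [hderiv.deriv]
  exact div_neg_of_neg_of_pos (mul_neg_of_pos_of_neg (exp_pos _)
    (sub_neg.2 (one_sub_sq_mul_normalIntegral_lt hx))) (pow_pos (normalIntegral_pos hx) 2)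

theorem strictConcaveOn_log_normalIntegral_exp :
    StrictConcaveOn ℝ univ fun u => log (normalIntegral (exp u)) := by
  have hderiv : ∀ u, HasDerivAt (fun u => log (normalIntegral (exp u)))
      (exp u * exp (-(exp u)^2/2) / normalIntegral (exp u)) u := fun u =>
    (((hasDerivAt_normalIntegral (exp u)).comp u (hasDerivAt_exp u)).log
      (normalIntegral_pos (exp_pos u)).ne').congr_deriv (by rw [Function.comp_apply]; ring)
  refine StrictAnti.strictConcaveOn_univ_of_deriv
    (continuous_iff_continuousAt.2 fun u => (hderiv u).continuousAt) fun u v huv => ?_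
  rw [(hderiv u).deriv, (hderiv v).deriv]
  exact strictAntiOn_mul_exp_div_normalIntegral (exp_pos u) (exp_pos v) (exp_lt_exp.2 huv)

theorem normalIntegral_mul_lt_of_mul_eq {a b c d : ℝ} (ha : 0 < a) (hb : 0 < b) (hc : 0 < c)
    (hd : 0 < d) (hprod : a * b = c * d) (hmax : max c d < max a b) :
    normalIntegral a * normalIntegral b < normalIntegral c * normalIntegral d := by
  have hlog := strictConcaveOn_log_normalIntegral_exp.add_lt_add_of_add_eq (mem_univ (log a))
    (mem_univ (log b)) (c := log c) (d := log d)
    (by rw [← log_mul ha.ne' hb.ne', ← log_mul hc.ne' hd.ne', hprod])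
    (by simpa only [max_lt_iff, lt_max_iff, log_lt_log_iff hc ha, log_lt_log_iff hc hb,
      log_lt_log_iff hd ha, log_lt_log_iff hd hb] using hmax)
  have hNa := normalIntegral_pos ha
  have hNb := normalIntegral_pos hb
  have hNc := normalIntegral_pos hc
  have hNd := normalIntegral_pos hd
  rw [← log_lt_log_iff (by positivity) (by positivity), log_mul hNa.ne' hNb.ne',
    log_mul hNc.ne' hNd.ne']
  simpa only [exp_log ha, exp_log hb, exp_log hc, exp_log hd] using hlog

theorem phi_eq_mul_normalIntegral (σ ζ : ℝ) :
    phi σ ζ = sqrt (2/π) * normalIntegral (ζ / (2*σ)) := rfl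

theorem stmt5 (σ r₁ r₂ s₁ s₂ : ℝ) (hσ : 0 < σ)
    (hr₁ : 0 < r₁) (hr₂ : 0 < r₂) (hs₁ : 0 < s₁) (hs₂ : 0 < s₂)
    (hprod : r₁ * r₂ = s₁ * s₂) (hmax : max s₁ s₂ < max r₁ r₂) :
    phi σ r₁ * phi σ r₂ < phi σ s₁ * phi σ s₂ := by
  have h2σ : 0 < 2 * σ := by positivity
  have key : normalIntegral (r₁ / (2*σ)) * normalIntegral (r₂ / (2*σ))
      < normalIntegral (s₁ / (2*σ)) * normalIntegral (s₂ / (2*σ)) := by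
    refine normalIntegral_mul_lt_of_mul_eq (by positivity) (by positivity) (by positivity)
      (by positivity) (by rw [div_mul_div_comm, div_mul_div_comm, hprod]) ?_
    rwa [max_div_div_right h2σ.le, max_div_div_right h2σ.le, div_lt_div_iff_of_pos_right h2σ]
  simp only [phi_eq_mul_normalIntegral]
  rw [mul_mul_mul_comm, mul_mul_mul_comm _ (normalIntegral _)]
  exact mul_lt_mul_of_pos_left key (by positivity)
end

section
/- Let σ > 0 and define φ(ζ) = √(2/π) · ∫₀^{ζ/(2σ)} exp(-t²/2) dt. If r₁₁, r₂₂ > 0 and δ·r₁₁² > r₁₂² + r₂₂² for some δ ∈ (1/4, 1], then with s₁₁ = √(r₁₂² + r₂₂²) and s₂₂ = r₁₁r₂₂/√(r₁₂² + r₂₂²), we have φ(r₁₁)·φ(r₂₂) ≤ φ(s₁₁)·φ(s₂₂), with equality if and only if r₁₂ = 0. -/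
noncomputable section

open Real Set

def gaussPrimitive (x : ℝ) : ℝ := ∫ t in (0 : ℝ)..x, exp (-t ^ 2 / 2)

def gaussElasticity (x : ℝ) : ℝ := x * exp (-x ^ 2 / 2) / gaussPrimitive x

lemma hasDerivAt_gaussPrimitive (x : ℝ) : HasDerivAt gaussPrimitive (exp (-x ^ 2 / 2)) x :=
  (Continuous.integral_hasStrictDerivAt (by fun_prop) 0 x).hasDerivAt

lemma gaussPrimitive_zero : gaussPrimitive 0 = 0 := intervalIntegral.integral_same

lemma strictMono_gaussPrimitive : StrictMono gaussPrimitive :=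
  strictMono_of_deriv_pos fun x => by
    rw [(hasDerivAt_gaussPrimitive x).deriv]
    positivity

lemma gaussPrimitive_pos {x : ℝ} (hx : 0 < x) : 0 < gaussPrimitive x :=
  gaussPrimitive_zero ▸ strictMono_gaussPrimitive hx

lemma hasDerivAt_mul_exp_neg_sq_div_two (x : ℝ) :
    HasDerivAt (fun x => x * exp (-x ^ 2 / 2)) ((1 - x ^ 2) * exp (-x ^ 2 / 2)) x := by
  have hexp : HasDerivAt (fun x => exp (-x ^ 2 / 2)) (exp (-x ^ 2 / 2) * (-(2 * x) / 2)) x := by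
    simpa using (((hasDerivAt_pow 2 x).neg).div_const 2).exp
  exact ((hasDerivAt_id x).mul hexp).congr_deriv (by simp only [id]; ring)

/-- `x ↦ x Ψ' x - (1 - x²) Ψ x` vanishes at `0` and has derivative `2 x Ψ x`. -/
lemma one_sub_sq_mul_gaussPrimitive_lt {x : ℝ} (hx : 0 < x) :
    (1 - x ^ 2) * gaussPrimitive x < x * exp (-x ^ 2 / 2) := by
  set H : ℝ → ℝ := fun y => y * exp (-y ^ 2 / 2) - (1 - y ^ 2) * gaussPrimitive y
  have hH : ∀ y, HasDerivAt H (2 * y * gaussPrimitive y) y := fun y => by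
    have hsq : HasDerivAt (fun y : ℝ => 1 - y ^ 2) (-(2 * y)) y := by
      simpa using (hasDerivAt_pow 2 y).const_sub 1
    exact ((hasDerivAt_mul_exp_neg_sq_div_two y).sub
      (hsq.mul (hasDerivAt_gaussPrimitive y))).congr_deriv (by ring)
  have hmono : StrictMonoOn H (Ici 0) := by
    refine strictMonoOn_of_deriv_pos (convex_Ici 0)
      (fun y _ => (hH y).continuousAt.continuousWithinAt) fun y hy => ?_
    rw [interior_Ici, mem_Ioi] at hy
    rw [(hH y).deriv]
    have := gaussPrimitive_pos hy
    positivity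
  have := hmono self_mem_Ici hx.le hx
  simp only [H, gaussPrimitive_zero] at this
  linarith

lemma strictAntiOn_gaussElasticity : StrictAntiOn gaussElasticity (Ioi 0) := by
  have hE : ∀ x, 0 < x → HasDerivAt gaussElasticity
      (exp (-x ^ 2 / 2) * ((1 - x ^ 2) * gaussPrimitive x - x * exp (-x ^ 2 / 2))
        / gaussPrimitive x ^ 2) x := fun x hx =>
    ((hasDerivAt_mul_exp_neg_sq_div_two x).div (hasDerivAt_gaussPrimitive x)
      (gaussPrimitive_pos hx).ne').congr_deriv (by ring)
  refine strictAntiOn_of_deriv_neg (convex_Ioi 0)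
    (fun x hx => (hE x hx).continuousAt.continuousWithinAt) fun x hx => ?_
  rw [interior_Ioi, mem_Ioi] at hx
  rw [(hE x hx).deriv]
  have := one_sub_sq_mul_gaussPrimitive_lt hx
  have := gaussPrimitive_pos hx
  exact div_neg_of_neg_of_pos (mul_neg_of_pos_of_neg (exp_pos _) (by linarith)) (by positivity)

lemma strictMonoOn_gaussPrimitive_mul_gaussPrimitive_div {P : ℝ} (hP : 0 < P) :
    StrictMonoOn (fun s => gaussPrimitive s * gaussPrimitive (P / s)) (Ioc 0 √P) := by
  have hF : ∀ s, 0 < s → HasDerivAt (fun s => gaussPrimitive s * gaussPrimitive (P / s))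
      (gaussPrimitive s * gaussPrimitive (P / s) / s *
        (gaussElasticity s - gaussElasticity (P / s))) s := fun s hs => by
    have hdiv : HasDerivAt (fun s => P / s) (-(P / s ^ 2)) s := by
      simpa [div_eq_mul_inv] using (hasDerivAt_inv hs.ne').const_mul P
    have h₁ := (gaussPrimitive_pos hs).ne'
    have h₂ := (gaussPrimitive_pos (div_pos hP hs)).ne'
    refine ((hasDerivAt_gaussPrimitive s).mul
      ((hasDerivAt_gaussPrimitive (P / s)).comp s hdiv)).congr_deriv ?_
    simp only [gaussElasticity, Function.comp_apply]
    field_simp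
    ring
  refine strictMonoOn_of_deriv_pos (convex_Ioc 0 √P)
    (fun s hs => (hF s hs.1).continuousAt.continuousWithinAt) fun s hs => ?_
  rw [interior_Ioc] at hs
  obtain ⟨hs, hsP⟩ := hs
  rw [(hF s hs).deriv]
  have hs_lt : s < P / s := by
    rw [lt_div_iff₀ hs, ← sq]
    exact (lt_sqrt hs.le).1 hsP
  have := gaussPrimitive_pos hs
  have := gaussPrimitive_pos (div_pos hP hs)
  exact mul_pos (by positivity)
    (sub_pos.2 (strictAntiOn_gaussElasticity hs (hs.trans hs_lt) hs_lt))

/-- Both `s` and `a b / s` lie strictly between `b` and `a`; the smaller of them is at most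
`√(a b)`, and `s ↦ Ψ s Ψ (a b / s)` is symmetric under `s ↦ a b / s`. -/
lemma gaussPrimitive_mul_lt_of_lt_of_lt {a b s : ℝ} (hb : 0 < b) (hbs : b < s) (hsa : s < a) :
    gaussPrimitive a * gaussPrimitive b < gaussPrimitive s * gaussPrimitive (a * b / s) := by
  have hs : 0 < s := hb.trans hbs
  have hP : 0 < a * b := mul_pos (hs.trans hsa) hb
  have hF := strictMonoOn_gaussPrimitive_mul_gaussPrimitive_div hP
  have hFb :
      gaussPrimitive b * gaussPrimitive (a * b / b) = gaussPrimitive a * gaussPrimitive b := by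
    rw [mul_div_cancel_right₀ _ hb.ne', mul_comm]
  have hb_le : b ≤ √(a * b) := ((lt_sqrt hb.le).2 (by nlinarith)).le
  rcases le_or_gt s √(a * b) with hs_le | hs_gt
  · have : gaussPrimitive b * gaussPrimitive (a * b / b) <
        gaussPrimitive s * gaussPrimitive (a * b / s) :=
      hF ⟨hb, hb_le⟩ ⟨hs, hs_le⟩ hbs
    rwa [hFb] at this
  · have hbt : b < a * b / s := by rw [lt_div_iff₀ hs]; nlinarith
    have ht_le : a * b / s ≤ √(a * b) := by
      rw [div_le_iff₀ hs]
      nlinarith [sq_sqrt hP.le, sqrt_pos.2 hP]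
    have : gaussPrimitive b * gaussPrimitive (a * b / b) <
        gaussPrimitive (a * b / s) * gaussPrimitive (a * b / (a * b / s)) :=
      hF ⟨hb, hb_le⟩ ⟨hb.trans hbt, ht_le⟩ hbt
    rwa [hFb, div_div_cancel₀ hP.ne', mul_comm (gaussPrimitive (a * b / s))] at this

lemma phi_eq_mul_gaussPrimitive (σ ζ : ℝ) :
    phi σ ζ = √(2 / π) * gaussPrimitive (ζ / (2 * σ)) := rfl

lemma phi_mul_lt_of_lt_of_lt {σ a b s : ℝ} (hσ : 0 < σ) (hb : 0 < b) (hbs : b < s) (hsa : s < a) :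
    phi σ a * phi σ b < phi σ s * phi σ (a * b / s) := by
  have hc : 0 < 2 * σ := by positivity
  have hs : s ≠ 0 := (hb.trans hbs).ne'
  have key := gaussPrimitive_mul_lt_of_lt_of_lt (div_pos hb hc)
    (div_lt_div_of_pos_right hbs hc) (div_lt_div_of_pos_right hsa hc)
  rw [show a / (2 * σ) * (b / (2 * σ)) / (s / (2 * σ)) = a * b / s / (2 * σ) by
    field_simp] at key
  simp only [phi_eq_mul_gaussPrimitive]
  have := mul_lt_mul_of_pos_left key (by positivity : 0 < √(2 / π) ^ 2)
  linarith

end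

theorem stmt7_general (σ r₁₁ r₁₂ r₂₂ δ : ℝ) (hσ : 0 < σ)
    (h₁₁ : 0 < r₁₁) (h₂₂ : 0 < r₂₂)
    (hδ₂ : δ ≤ 1) (hlov : δ * r₁₁^2 > r₁₂^2 + r₂₂^2) :
    phi σ r₁₁ * phi σ r₂₂ ≤
      phi σ (Real.sqrt (r₁₂^2 + r₂₂^2)) *
        phi σ (r₁₁ * r₂₂ / Real.sqrt (r₁₂^2 + r₂₂^2)) ∧
    (phi σ r₁₁ * phi σ r₂₂ =
      phi σ (Real.sqrt (r₁₂^2 + r₂₂^2)) *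
        phi σ (r₁₁ * r₂₂ / Real.sqrt (r₁₂^2 + r₂₂^2)) ↔ r₁₂ = 0) := by
  rcases eq_or_ne r₁₂ 0 with rfl | h₁₂
  · have hs : Real.sqrt (0 ^ 2 + r₂₂ ^ 2) = r₂₂ := by simp [Real.sqrt_sq h₂₂.le]
    rw [hs, mul_div_cancel_right₀ _ h₂₂.ne', mul_comm]
    simp
  · have hs_gt : r₂₂ < Real.sqrt (r₁₂ ^ 2 + r₂₂ ^ 2) :=
      (Real.lt_sqrt h₂₂.le).2 (lt_add_of_pos_left _ (by positivity))
    have hs_lt : Real.sqrt (r₁₂ ^ 2 + r₂₂ ^ 2) < r₁₁ :=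
      (Real.sqrt_lt' h₁₁).2 (by nlinarith)
    have hlt := phi_mul_lt_of_lt_of_lt hσ h₂₂ hs_gt hs_lt
    exact ⟨hlt.le, iff_of_false hlt.ne h₁₂⟩

theorem stmt7 (σ r₁₁ r₁₂ r₂₂ δ : ℝ) (hσ : 0 < σ)
    (h₁₁ : 0 < r₁₁) (h₂₂ : 0 < r₂₂)
    (hδ₁ : 1/4 < δ) (hδ₂ : δ ≤ 1) (hlov : δ * r₁₁^2 > r₁₂^2 + r₂₂^2) :
    phi σ r₁₁ * phi σ r₂₂ ≤
      phi σ (Real.sqrt (r₁₂^2 + r₂₂^2)) *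
        phi σ (r₁₁ * r₂₂ / Real.sqrt (r₁₂^2 + r₂₂^2)) ∧
    (phi σ r₁₁ * phi σ r₂₂ =
      phi σ (Real.sqrt (r₁₂^2 + r₂₂^2)) *
        phi σ (r₁₁ * r₂₂ / Real.sqrt (r₁₂^2 + r₂₂^2)) ↔ r₁₂ = 0) :=
  stmt7_general σ r₁₁ r₁₂ r₂₂ δ hσ h₁₁ h₂₂ hδ₂ hlov
end
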